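/- arXiv:2003.04076 — 2 statements merged into one kernel-verified Lean document; each statement's English description precedes it below -/
import Mathlib

section
/- Let A be a finite set of integers with min 0, max b, gcd 1, and fix 1 ≤ a ≤ b-1. If N_{a,A} > b/2, then there is an integer h with 1 ≤ h ≤ b-1, gcd(h,b) = 1, h ∈ A, such that n_{a,A} = N_{a,A}·h; moreover for every k ∈ A with k ≠ h and k ≠ 0, the least positive residue of k·h^{-1} mod b is at least N_{a,A} + 1. -/
/-!
Write `n_{a,A}` as a sum `x₁ + ⋯ + x_N` of `N = N_{a,A}` elements of `A`. Minimality of `n_{a,A}`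
and of `N` force two subsums that agree mod `b` to agree exactly and to have the same number of
terms. Hence the pairs (number of terms, value) of the subsums number at most `b`. If the `xᵢ` were
not all equal, say `xᵢ ≠ xⱼ`, there would be at least `2N > b` such pairs: one for each size
`0, …, N`, and a second one for each size `1, …, N - 1`, obtained by exchanging `xᵢ` and `xⱼ`.
So `n_{a,A} = N h`, and `k h ≢ 0 (mod b)` for `0 < k ≤ N`, which gives `gcd(h, b) = 1`. Finally,
if `l h ≡ k` with `l ≤ N`, then `(N - l) h + k` lies in the residue class of `a`, and minimality
forces `k = l h` and then `l = 1`.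
-/

/-- The `N`-fold sumset of a set of integers. -/
def nfold (A : Set ℤ) (N : ℕ) : Set ℤ :=
  {x | ∃ f : Fin N → ℤ, (∀ i, f i ∈ A) ∧ ∑ i, f i = x}

/-- Nonnegative integer combinations of the elements of a finite set of integers. -/
def combos (A : Finset ℤ) : Set ℤ :=
  {n | ∃ c : ℤ → ℕ, ∑ a ∈ A, (c a : ℤ) * a = n}

open Finset

theorem sum_mem_nfold {A : Set ℤ} {ι : Type*} (S : Finset ι) (f : ι → ℤ)
    (hf : ∀ i ∈ S, f i ∈ A) : ∑ i ∈ S, f i ∈ nfold A #S := by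
  refine ⟨fun t => f (S.equivFin.symm t), fun t => hf _ (S.equivFin.symm t).2, ?_⟩
  rw [← Equiv.sum_comp S.equivFin (fun t => f (S.equivFin.symm t))]
  simp [Finset.sum_attach]

theorem nfold_add {A : Set ℤ} {u v : ℤ} {p q : ℕ} (hu : u ∈ nfold A p) (hv : v ∈ nfold A q) :
    u + v ∈ nfold A (p + q) := by
  obtain ⟨f, hf, rfl⟩ := hu
  obtain ⟨g, hg, rfl⟩ := hv
  refine ⟨Fin.append f g, Fin.addCases (by simpa using hf) (by simpa using hg), ?_⟩
  simp [Fin.sum_univ_add]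

theorem nfold_subset_combos (A : Finset ℤ) (N : ℕ) : nfold (↑A) N ⊆ combos A := by
  rintro _ ⟨f, hf, rfl⟩
  refine ⟨fun a => #{i | f i = a}, ?_⟩
  rw [← sum_fiberwise_of_maps_to (g := f) (t := A) fun i _ => hf i]
  refine sum_congr rfl fun a _ => ?_
  rw [sum_congr rfl fun i hi => (mem_filter.1 hi).2, sum_const, nsmul_eq_mul]

section Subsums

variable {ι : Type*} [Fintype ι]

def SubsumsDeterminedByResidue (b : ℤ) (x : ι → ℤ) : Prop :=
  ∀ S T : Finset ι, ∑ i ∈ S, x i ≡ ∑ i ∈ T, x i [ZMOD b] →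
    ∑ i ∈ S, x i = ∑ i ∈ T, x i ∧ #S = #T

def cardSumPairs (x : ι → ℤ) : Finset (ℕ × ℤ) :=
  (univ : Finset (Finset ι)).image fun S => (#S, ∑ i ∈ S, x i)

theorem mem_cardSumPairs (x : ι → ℤ) (S : Finset ι) : (#S, ∑ i ∈ S, x i) ∈ cardSumPairs x :=
  mem_image_of_mem _ (mem_univ S)

theorem SubsumsDeterminedByResidue.card_cardSumPairs_le {b : ℤ} {x : ι → ℤ}
    (hx : SubsumsDeterminedByResidue b x) (hb : 0 < b) : (#(cardSumPairs x) : ℤ) ≤ b := by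
  have hinj : Set.InjOn (fun p : ℕ × ℤ => p.2 % b) (cardSumPairs x) := by
    rintro _ hp _ hq hpq
    obtain ⟨S, -, rfl⟩ := mem_image.1 hp
    obtain ⟨T, -, rfl⟩ := mem_image.1 hq
    obtain ⟨hsum, hcard⟩ := hx S T hpq
    rw [hsum, hcard]
  have hmaps : Set.MapsTo (fun p : ℕ × ℤ => p.2 % b) (cardSumPairs x) (Ico 0 b) := fun p _ =>
    mem_Ico.2 ⟨Int.emod_nonneg _ hb.ne', Int.emod_lt_of_pos _ hb⟩
  have := card_le_card_of_injOn _ hmaps hinj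
  rw [Int.card_Ico] at this
  omega

theorem two_mul_card_le_card_cardSumPairs {x : ι → ℤ} {i j : ι} (hij : x i ≠ x j) :
    2 * Fintype.card ι ≤ #(cardSumPairs x) := by
  classical
  have hne : i ≠ j := fun h => hij (congrArg x h)
  set N := Fintype.card ι
  let fiber (k : ℕ) := {p ∈ cardSumPairs x | p.1 = k}
  have hfiber_pos : ∀ k ≤ N, 1 ≤ #(fiber k) := by
    intro k hk
    obtain ⟨S, -, rfl⟩ := exists_subset_card_eq (s := univ) (n := k) (by simpa)
    exact card_pos.2 ⟨_, mem_filter.2 ⟨mem_cardSumPairs x S, rfl⟩⟩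
  have hfiber_two : ∀ k, k + 2 ≤ N → 2 ≤ #(fiber (k + 1)) := by
    intro k hk
    obtain ⟨R, hR, rfl⟩ := exists_subset_card_eq (s := (univ.erase i).erase j) (n := k) (by
      rw [card_erase_of_mem (by simpa using hne.symm), card_erase_of_mem (mem_univ i),
        card_univ]
      omega)
    have hiR : i ∉ R := fun h => by simpa using hR h
    have hjR : j ∉ R := fun h => by simpa using hR h
    refine one_lt_card.2 ⟨_, mem_filter.2 ⟨mem_cardSumPairs x (insert i R), ?_⟩,
      _, mem_filter.2 ⟨mem_cardSumPairs x (insert j R), ?_⟩, ?_⟩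
    · simp [card_insert_of_notMem hiR]
    · simp [card_insert_of_notMem hjR]
    · simp [sum_insert hiR, sum_insert hjR, hij]
  have hsplit : #(cardSumPairs x) = ∑ k ∈ range (N + 1), #(fiber k) :=
    card_eq_sum_card_fiberwise fun p hp => by
      obtain ⟨S, -, rfl⟩ := mem_image.1 hp
      simpa [Nat.lt_succ_iff] using card_le_univ S
  obtain ⟨n, hn⟩ : ∃ n, N = n + 2 := ⟨N - 2, by
    have := card_le_univ {i, j}
    rw [card_pair hne] at this
    omega⟩
  have hmiddle : n * 2 ≤ ∑ k ∈ range n, #(fiber (k + 1)) := by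
    simpa using card_nsmul_le_sum (range n) (fun k => #(fiber (k + 1))) 2
      fun k hk => hfiber_two k (by simp at hk; omega)
  rw [hsplit, hn, sum_range_succ, sum_range_succ', sum_range_succ]
  have := hfiber_pos 0 (by omega)
  have := hfiber_pos (n + 2) (by omega)
  have := hfiber_two n (by omega)
  omega

theorem SubsumsDeterminedByResidue.eq {b : ℤ} {x : ι → ℤ} (hx : SubsumsDeterminedByResidue b x)
    (hb : 0 < b) (hbig : b < 2 * Fintype.card ι) (i j : ι) : x i = x j := by
  by_contra hij
  have := two_mul_card_le_card_cardSumPairs hij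
  have := hx.card_cardSumPairs_le hb
  omega

theorem SubsumsDeterminedByResidue.not_dvd_mul {b h : ℤ}
    (hx : SubsumsDeterminedByResidue b fun _ : ι => h) {k : ℕ} (hk : 0 < k)
    (hkN : k ≤ Fintype.card ι) : ¬ b ∣ k * h := by
  intro hdvd
  obtain ⟨S, -, rfl⟩ := exists_subset_card_eq (s := univ) (n := k) (by simpa)
  have hcard := (hx S ∅ (by simpa [Int.modEq_zero_iff_dvd] using hdvd)).2
  exact hk.ne' (by simpa using hcard)

end Subsums

theorem Int.gcd_eq_one_of_forall_not_dvd_mul {b h : ℤ} (hb : 0 < b)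
    (hndvd : ∀ k : ℕ, 0 < k → 2 * k ≤ b → ¬ b ∣ k * h) : Int.gcd h b = 1 := by
  by_contra hd
  obtain ⟨e, he⟩ := Int.gcd_dvd_right h b
  obtain ⟨q, hq⟩ := Int.gcd_dvd_left h b
  have hd0 : Int.gcd h b ≠ 0 := fun h0 => by simp [Int.gcd_eq_zero_iff] at h0; omega
  generalize Int.gcd h b = d at hd he hq hd0
  have hd2 : (2 : ℤ) ≤ d := by omega
  have he0 : 0 < e := by nlinarith
  lift e to ℕ using he0.le
  -- `b = d * e` with `d ≥ 2`, so `e ≤ b / 2` while `e * h = b * q`.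
  refine hndvd e (by exact_mod_cast he0) (by nlinarith) ⟨q, ?_⟩
  rw [hq, he]
  ring

section MinimalRepresentation

variable {A : Finset ℤ} {a b na : ℤ} {Na : ℕ}

theorem sum_le_sum_of_modEq {ι : Type*} [Fintype ι] (hA : ∀ y ∈ A, 0 ≤ y)
    (hna : IsLeast {n : ℤ | 0 ≤ n ∧ n ≡ a [ZMOD b] ∧ n ∈ combos A} na)
    {x : ι → ℤ} (hx : ∀ i, x i ∈ A) (hsum : ∑ i, x i = na) {S T : Finset ι}
    (hST : ∑ i ∈ S, x i ≡ ∑ i ∈ T, x i [ZMOD b]) : ∑ i ∈ T, x i ≤ ∑ i ∈ S, x i := by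
  classical
  have hsplit := sum_compl_add_sum T x
  -- Trading the terms indexed by `T` for those indexed by `S` stays in the residue class of `a`.
  have hle : na ≤ ∑ i ∈ Tᶜ, x i + ∑ i ∈ S, x i := by
    refine hna.2 ⟨?_, ?_, nfold_subset_combos A _ <|
      nfold_add (sum_mem_nfold _ x fun i _ => hx i) (sum_mem_nfold _ x fun i _ => hx i)⟩
    · exact add_nonneg (sum_nonneg fun i _ => hA _ (hx i)) (sum_nonneg fun i _ => hA _ (hx i))
    · exact ((Int.ModEq.add_left _ hST).trans (by rw [hsplit, hsum])).trans hna.1.2.1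
  omega

theorem card_le_card_of_sum_eq (hNa : IsLeast {N : ℕ | na ∈ nfold (↑A) N} Na)
    {x : Fin Na → ℤ} (hx : ∀ i, x i ∈ A) (hsum : ∑ i, x i = na) {S T : Finset (Fin Na)}
    (hST : ∑ i ∈ S, x i = ∑ i ∈ T, x i) : #T ≤ #S := by
  have hmem : na ∈ nfold (↑A) (#Tᶜ + #S) := by
    rw [← hsum, ← sum_compl_add_sum T x, hST.symm]
    exact nfold_add (sum_mem_nfold _ x fun i _ => hx i) (sum_mem_nfold _ x fun i _ => hx i)
  have hle := hNa.2 hmem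
  have hT : #T ≤ Na := by simpa using card_le_univ T
  rw [card_compl, Fintype.card_fin] at hle
  omega

theorem subsumsDeterminedByResidue_of_isLeast (hA : ∀ y ∈ A, 0 ≤ y)
    (hna : IsLeast {n : ℤ | 0 ≤ n ∧ n ≡ a [ZMOD b] ∧ n ∈ combos A} na)
    (hNa : IsLeast {N : ℕ | na ∈ nfold (↑A) N} Na)
    {x : Fin Na → ℤ} (hx : ∀ i, x i ∈ A) (hsum : ∑ i, x i = na) :
    SubsumsDeterminedByResidue b x := fun S T hST => by
  have hsum_eq := le_antisymm (sum_le_sum_of_modEq hA hna hx hsum hST.symm)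
    (sum_le_sum_of_modEq hA hna hx hsum hST)
  exact ⟨hsum_eq, le_antisymm (card_le_card_of_sum_eq hNa hx hsum hsum_eq.symm)
    (card_le_card_of_sum_eq hNa hx hsum hsum_eq)⟩

theorem add_one_le_of_mul_modEq (hA : ∀ y ∈ A, 0 ≤ y ∧ y ≤ b)
    (hna : IsLeast {n : ℤ | 0 ≤ n ∧ n ≡ a [ZMOD b] ∧ n ∈ combos A} na)
    (hNa : IsLeast {N : ℕ | na ∈ nfold (↑A) N} Na) {h : ℤ} (hh : h ∈ A) (hh1 : 1 ≤ h)
    (hnah : na = Na * h) {k : ℤ} (hk : k ∈ A) (hkh : k ≠ h) {l : ℤ} (hl : 1 ≤ l)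
    (hlk : l * h ≡ k [ZMOD b]) : (Na : ℤ) + 1 ≤ l := by
  by_contra! hlNa
  obtain ⟨t, ht⟩ : ∃ t : ℕ, (t : ℤ) = Na - l := ⟨(Na - l).toNat, by omega⟩
  have hmem : (t : ℤ) * h + k ∈ nfold (↑A) (t + 1) :=
    nfold_add ⟨fun _ => h, fun _ => hh, by simp⟩ ⟨fun _ => k, fun _ => hk, by simp⟩
  have hmod : (t : ℤ) * h + k ≡ a [ZMOD b] := by
    refine ((Int.ModEq.add_left _ hlk.symm).trans ?_).trans hna.1.2.1
    rw [hnah, ht, sub_mul, sub_add_cancel]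
  have hle : na ≤ t * h + k := hna.2 ⟨by nlinarith [(hA k hk).1], hmod, nfold_subset_combos A _ hmem⟩
  have hlh : l * h ≤ k := by rw [hnah, ht] at hle; linarith
  -- Now `1 ≤ l * h ≤ k ≤ b`, so the congruence `l * h ≡ k` is an equality.
  have hk_eq : k = l * h := by
    obtain ⟨c, hc⟩ := hlk.dvd
    have hc0 : c = 0 := by nlinarith [(hA k hk).2, (hA h hh).2]
    rw [hc0, mul_zero, sub_eq_zero] at hc
    exact hc
  have hNa_le : Na ≤ t + 1 := hNa.2 (by rwa [hnah, ← sub_add_cancel (Na * h : ℤ) (l * h),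
    ← sub_mul, ← ht, ← hk_eq])
  have hl1 : l = 1 := by omega
  exact hkh (by rw [hk_eq, hl1, one_mul])

end MinimalRepresentation

theorem stmt12_general (A : Finset ℤ) (b : ℤ)
    (hbound : ∀ x ∈ A, 0 ≤ x ∧ x ≤ b)
    (a : ℤ) (ha1 : 1 ≤ a) (hab : a ≤ b - 1)
    (na : ℤ) (hna : IsLeast {n : ℤ | 0 ≤ n ∧ n ≡ a [ZMOD b] ∧ n ∈ combos A} na)
    (Na : ℕ) (hNa : IsLeast {N : ℕ | na ∈ nfold (↑A) N} Na)
    (hbig : b < 2 * (Na : ℤ)) :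
    ∃ h : ℤ, 1 ≤ h ∧ h ≤ b - 1 ∧ Int.gcd h b = 1 ∧ h ∈ A ∧
      na = (Na : ℤ) * h ∧
      ∀ k ∈ A, k ≠ h → k ≠ 0 →
        ∀ l : ℤ, 1 ≤ l → l ≤ b → l * h ≡ k [ZMOD b] → (Na : ℤ) + 1 ≤ l := by
  have hb : 0 < b := by omega
  obtain ⟨x, hxA, hsum⟩ := hNa.1
  have hrigid : SubsumsDeterminedByResidue b x :=
    subsumsDeterminedByResidue_of_isLeast (fun y hy => (hbound y hy).1) hna hNa hxA hsum
  set h := x ⟨0, by omega⟩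
  have hx : x = fun _ => h := funext fun i => hrigid.eq hb (by simpa using hbig) i _
  rw [hx] at hrigid hsum
  have hnah : na = Na * h := by simp [← hsum]
  have hndvd : ∀ k : ℕ, 0 < k → k ≤ Na → ¬ b ∣ k * h := fun k hk hkN =>
    hrigid.not_dvd_mul hk (by simpa using hkN)
  have hhA : h ∈ A := hxA _
  have hh : 1 ≤ h ∧ h ≤ b - 1 := by
    have hh_dvd : ¬ b ∣ h := by simpa using hndvd 1 one_pos (by omega)
    have : h ≠ 0 := fun h0 => hh_dvd (h0 ▸ dvd_zero b)
    have : h ≠ b := fun hb' => hh_dvd (hb' ▸ dvd_refl b)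
    have := hbound h hhA
    omega
  refine ⟨h, hh.1, hh.2,
    Int.gcd_eq_one_of_forall_not_dvd_mul hb fun k hk hkb => hndvd k hk (by omega), hhA, hnah,
    fun k hk hkh _ l hl _ hlk => ?_⟩
  exact add_one_le_of_mul_modEq hbound hna hNa hhA hh.1 hnah hk hkh hl hlk

/-- If `N_{a,A} > b/2` then `n_{a,A} = N_{a,A}·h` for some
`h ∈ A` with `1 ≤ h ≤ b-1` and `gcd(h,b) = 1`; moreover for every `k ∈ A`
with `k ≠ h`, `k ≠ 0`, the least positive residue of `k·h⁻¹ (mod b)` (i.e.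
the unique `l ∈ [1,b]` with `l·h ≡ k (mod b)`) is at least `N_{a,A} + 1`. -/
theorem stmt12 (A : Finset ℤ) (b : ℤ) (h0 : 0 ∈ A) (hb : b ∈ A)
    (hbound : ∀ x ∈ A, 0 ≤ x ∧ x ≤ b) (hgcd : A.gcd id = 1)
    (a : ℤ) (ha1 : 1 ≤ a) (hab : a ≤ b - 1)
    (na : ℤ) (hna : IsLeast {n : ℤ | 0 ≤ n ∧ n ≡ a [ZMOD b] ∧ n ∈ combos A} na)
    (Na : ℕ) (hNa : IsLeast {N : ℕ | na ∈ nfold (↑A) N} Na)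
    (hbig : b < 2 * (Na : ℤ)) :
    ∃ h : ℤ, 1 ≤ h ∧ h ≤ b - 1 ∧ Int.gcd h b = 1 ∧ h ∈ A ∧
      na = (Na : ℤ) * h ∧
      ∀ k ∈ A, k ≠ h → k ≠ 0 →
        ∀ l : ℤ, 1 ≤ l → l ≤ b → l * h ≡ k [ZMOD b] → (Na : ℤ) + 1 ≤ l :=
  stmt12_general A b hbound a ha1 hab na hna Na hNa hbig
end

section
/- Let 0 ∈ A ⊂ ℤ^n with ⟨A⟩_ℤ = ℤ^n. Then E(A) is a finite union of sets of the form v + P(B ∪ {0}), where v ∈ C_A ∩ ℤ^n and B ⊆ A has at most n-1 elements which are linearly independent. Consequently #(E(A) ∩ N·H(A)) = O(N^{n-1}). -/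
open Pointwise

/-- Nonnegative integer combinations of the elements of a finite set of vectors. -/
def PV {n : ℕ} (A : Finset (Fin n → ℤ)) : Set (Fin n → ℤ) :=
  {x | ∃ c : (Fin n → ℤ) → ℕ, ∑ a ∈ A, (c a : ℤ) • a = x}

/-- Coordinatewise cast of an integer vector to a real vector. -/
def castVec {n : ℕ} (v : Fin n → ℤ) : Fin n → ℝ := fun i => (v i : ℝ)

/-- The cone of nonnegative real combinations of a finite set of integer vectors. -/
def coneV {n : ℕ} (A : Finset (Fin n → ℤ)) : Set (Fin n → ℝ) :=
  {x | ∃ c : (Fin n → ℤ) → ℝ, (∀ a ∈ A, 0 ≤ c a) ∧ ∑ a ∈ A, c a • castVec a = x}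

/-- The exceptional set: lattice points of the cone not representable. -/
def EV {n : ℕ} (A : Finset (Fin n → ℤ)) : Set (Fin n → ℤ) :=
  {x | castVec x ∈ coneV A ∧ x ∉ PV A}

/-!
By Carathéodory's theorem for cones, a lattice point `x` of `C_A` is `∑ t_b • b` with `t ≥ 0`
and `B ⊆ A` linearly independent; taking integer parts gives `x = f + ∑ ⌊t_b⌋ • b` with `f`
in a bounded, hence finite, set of lattice points. For fixed `(B, f)`, the coefficient vectors
`c ∈ ℕ^B` with `f + ∑ c_b • b ∈ E(A)` form a lower set (adding an element of `P(A)` to a point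
of `P(A)` stays in `P(A)`), and by Dickson's lemma a lower set of `ℕ^B` is a finite union of
translated coordinate orthants `p + ℕ^T`. If `|B| = n`, then `⟨B⟩_ℤ` has finite index in
`ℤ^n = ⟨A⟩_ℤ`, so some `f + P(B)` meets `P(A)`: the lower set is proper and every `T` has
fewer than `n` elements. Finally, on a piece `v + P(T)` with `T` independent the coefficients
of a point of norm at most `N R` are `O(N)`, so the piece meets `N • H(A)` in `O(N^|T|)` points.
-/

section Caratheodory

variable {𝕜 V ι : Type*} [Field 𝕜] [LinearOrder 𝕜] [IsStrictOrderedRing 𝕜] [AddCommGroup V]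
  [Module 𝕜 V] {v : ι → V}

lemma exists_nonneg_sum_erase_eq_of_not_linearIndepOn [DecidableEq ι] {s : Finset ι}
    (hs : ¬ LinearIndepOn 𝕜 v (s : Set ι)) {t : ι → 𝕜} (ht : ∀ i ∈ s, 0 ≤ t i) :
    ∃ i ∈ s, ∃ t' : ι → 𝕜, (∀ j ∈ s.erase i, 0 ≤ t' j) ∧
      ∑ j ∈ s.erase i, t' j • v j = ∑ j ∈ s, t j • v j := by
  obtain ⟨g, hg, k, hk, hgk⟩ : ∃ g : ι → 𝕜, ∑ i ∈ s, g i • v i = 0 ∧ ∃ k ∈ s, 0 < g k := by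
    rw [linearIndepOn_finset_iff] at hs
    push Not at hs
    obtain ⟨g, hg, k, hk, hgk⟩ := hs
    rcases hgk.lt_or_gt with hneg | hpos
    · exact ⟨-g, by simp [neg_smul, hg], k, hk, neg_pos.2 hneg⟩
    · exact ⟨g, hg, k, hk, hpos⟩
  -- Move along the relation `g` until the first coefficient of `t` hits zero.
  obtain ⟨i, hi, hmin⟩ := Finset.exists_min_image (s.filter fun j => 0 < g j)
    (fun j => t j / g j) ⟨k, Finset.mem_filter.2 ⟨hk, hgk⟩⟩
  rw [Finset.mem_filter] at hi
  set r := t i / g i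
  have hr : 0 ≤ r := div_nonneg (ht i hi.1) hi.2.le
  refine ⟨i, hi.1, fun j => t j - r * g j, fun j hj => ?_, ?_⟩
  · have hjs := Finset.mem_of_mem_erase hj
    rcases le_or_gt (g j) 0 with hle | hpos
    · nlinarith [ht j hjs]
    · have := (le_div_iff₀ hpos).1 (hmin j (Finset.mem_filter.2 ⟨hjs, hpos⟩))
      linarith
  · have hri : t i - r * g i = 0 := by simp [r, div_mul_cancel₀ _ hi.2.ne']
    rw [Finset.sum_erase _ (by simp only [hri, zero_smul])]
    simp only [sub_smul, mul_smul, Finset.sum_sub_distrib, ← Finset.smul_sum, hg, smul_zero,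
      sub_zero]

/-- Carathéodory's theorem for cones. -/
theorem exists_linearIndepOn_nonneg_sum_eq (s : Finset ι) (t : ι → 𝕜) (ht : ∀ i ∈ s, 0 ≤ t i) :
    ∃ s' ⊆ s, LinearIndepOn 𝕜 v (s' : Set ι) ∧
      ∃ t' : ι → 𝕜, (∀ i ∈ s', 0 ≤ t' i) ∧ ∑ i ∈ s', t' i • v i = ∑ i ∈ s, t i • v i := by
  classical
  induction s using Finset.strongInduction generalizing t with
  | H s ih =>
    by_cases hs : LinearIndepOn 𝕜 v (s : Set ι)
    · exact ⟨s, subset_rfl, hs, t, ht, rfl⟩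
    obtain ⟨i, hi, t', ht', hsum⟩ := exists_nonneg_sum_erase_eq_of_not_linearIndepOn hs ht
    obtain ⟨s', hs', hli, t'', ht'', hsum'⟩ := ih _ (Finset.erase_ssubset hi) t' ht'
    exact ⟨s', hs'.trans (Finset.erase_subset _ _), hli, t'', ht'', hsum'.trans hsum⟩

end Caratheodory

section LowerSet

variable {ι : Type*} [Fintype ι]

/-- A form of Dickson's lemma. -/
lemma exists_bound_forall_exists_le (U : Set (ι → ℕ)) :
    ∃ m : ℕ, ∀ u ∈ U, ∃ u' ∈ U, u' ≤ u ∧ ∀ i, u' i ≤ m := by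
  have hfin : {x | Minimal (· ∈ U) x}.Finite :=
    WellQuasiOrderedLE.finite_of_isAntichain (setOfPred_minimal_antichain _)
  obtain ⟨g, hg⟩ := hfin.bddAbove
  refine ⟨Finset.univ.sup g, fun u hu => ?_⟩
  obtain ⟨u', hu'u, hmin⟩ := (Set.isPWO_of_wellQuasiOrderedLE U).exists_le_minimal hu
  exact ⟨u', hmin.prop, hu'u, fun i => (hg hmin i).trans (Finset.le_sup (Finset.mem_univ i))⟩

theorem IsLowerSet.exists_finite_eq_biUnion {D : Set (ι → ℕ)} (hD : IsLowerSet D) :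
    ∃ S : Set ((ι → ℕ) × Finset ι), S.Finite ∧
      D = ⋃ q ∈ S, (q.1 + ·) '' {c | c.support ⊆ q.2} := by
  classical
  obtain ⟨m, hm⟩ := exists_bound_forall_exists_le Dᶜ
  refine ⟨{q | q.1 ≤ (fun _ => m) ∧ (q.1 + ·) '' {c | c.support ⊆ q.2} ⊆ D}, ?_,
    subset_antisymm (fun c hc => ?_) (Set.iUnion₂_subset fun q hq => hq.2)⟩
  · exact ((Set.finite_Iic _).prod Set.finite_univ).subset fun q hq => ⟨hq.1, trivial⟩
  set p : ι → ℕ := fun i => min (c i) m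
  set T : Finset ι := Finset.univ.filter fun i => m ≤ c i
  -- a point of `p + ℕ^T` outside `D` lies above a non-member bounded by `m`, which is below `c`
  have hpiece : (p + ·) '' {d | d.support ⊆ T} ⊆ D := by
    rintro _ ⟨d, hd, rfl⟩
    by_contra hnot
    obtain ⟨u, hu, hule, hum⟩ := hm _ hnot
    refine hu (hD (fun i => ?_) hc)
    by_cases hi : m ≤ c i
    · exact (hum i).trans hi
    · have hdi : d i = 0 := Function.notMem_support.1 fun h => hi (by simpa [T] using hd h)
      have := hule i
      simp only [Pi.add_apply, hdi, add_zero, p] at this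
      exact this.trans (min_le_left _ _)
  refine Set.mem_biUnion (x := (p, T)) ⟨fun i => min_le_right _ _, hpiece⟩ ⟨c - p, ?_, ?_⟩
  · intro i hi
    simp only [Function.mem_support, Pi.sub_apply, p] at hi
    simp only [Finset.coe_filter, Finset.mem_univ, true_and, Set.mem_ofPred_eq, T]
    omega
  · exact add_tsub_cancel_of_le fun i => min_le_left _ _

end LowerSet

lemma image_linearCombination_support_subset {ι M : Type*} [Fintype ι] [AddCommMonoid M]
    (w : ι → M) (T : Set ι) :
    Fintype.linearCombination ℕ w '' {c | c.support ⊆ T} = AddSubmonoid.closure (w '' T) := by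
  classical
  refine subset_antisymm ?_ fun x hx => ?_
  · rintro _ ⟨c, hc, rfl⟩
    rw [Fintype.linearCombination_apply]
    refine AddSubmonoid.sum_mem _ fun i _ => ?_
    by_cases hi : c i = 0
    · simp [hi]
    · exact AddSubmonoid.nsmul_mem _
        (AddSubmonoid.subset_closure (Set.mem_image_of_mem w (hc hi))) _
  induction hx using AddSubmonoid.closure_induction with
  | mem _ h =>
    obtain ⟨i, hi, rfl⟩ := h
    exact ⟨Pi.single i 1, Pi.support_single_subset.trans (Set.singleton_subset_iff.2 hi),
      by simp [Fintype.linearCombination_apply, Pi.single_apply]⟩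
  | zero => exact ⟨0, by simp, map_zero _⟩
  | add x y _ _ hx hy =>
    obtain ⟨c, hc, rfl⟩ := hx
    obtain ⟨d, hd, rfl⟩ := hy
    exact ⟨c + d, (Function.support_add _ _).trans (Set.union_subset hc hd), map_add _ _ _⟩

theorem exists_add_mem_closure_of_index_ne_zero {M : Type*} [AddCommGroup M] {A B : Set M}
    (hBA : B ⊆ A) (hA : AddSubgroup.closure A = ⊤) (hB : (AddSubgroup.closure B).index ≠ 0)
    (x : M) : ∃ p ∈ AddSubmonoid.closure B, x + p ∈ AddSubmonoid.closure A := by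
  let G : AddSubmonoid M :=
    { carrier := {x | ∃ p ∈ AddSubmonoid.closure B, x + p ∈ AddSubmonoid.closure A}
      add_mem' := by
        rintro x y ⟨p, hp, hxp⟩ ⟨q, hq, hyq⟩
        exact ⟨p + q, add_mem hp hq, by simpa only [add_add_add_comm] using add_mem hxp hyq⟩
      zero_mem' := ⟨0, zero_mem _, by simp⟩ }
  have hAG : A ⊆ G := fun a ha => ⟨0, zero_mem _, by simpa using AddSubmonoid.subset_closure ha⟩
  have hBG : (AddSubgroup.closure B).toAddSubmonoid ≤ G := by
    rw [AddSubgroup.closure_toAddSubmonoid, AddSubmonoid.closure_le]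
    refine Set.union_subset (hBA.trans hAG) fun b hb => ⟨-b, AddSubmonoid.subset_closure hb, ?_⟩
    simp
  -- with `m` the index, `m • a ∈ ⟨B⟩`, and `-a = (m - 1) • a - m • a`
  have hnegA : ∀ a ∈ A, -a ∈ G := by
    intro a ha
    obtain ⟨k, hk⟩ := Nat.exists_eq_succ_of_ne_zero hB
    have hma : -((AddSubgroup.closure B).index • a) ∈ G :=
      hBG ((AddSubgroup.closure B).neg_mem (AddSubgroup.nsmul_index_mem _ a))
    rw [hk, succ_nsmul] at hma
    simpa using add_mem (AddSubmonoid.nsmul_mem _ (hAG ha) k) hma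
  have hG : (AddSubgroup.closure A).toAddSubmonoid ≤ G := by
    rw [AddSubgroup.closure_toAddSubmonoid, AddSubmonoid.closure_le]
    exact Set.union_subset hAG fun a ha => by simpa using hnegA _ ha
  exact hG (hA ▸ AddSubgroup.mem_top x)

section Lattice

variable {n : ℕ}

@[simp] lemma castVec_add (x y : Fin n → ℤ) : castVec (x + y) = castVec x + castVec y := by
  ext; simp [castVec]

@[simp] lemma castVec_sub (x y : Fin n → ℤ) : castVec (x - y) = castVec x - castVec y := by
  ext; simp [castVec]

@[simp] lemma castVec_zsmul (m : ℤ) (x : Fin n → ℤ) : castVec (m • x) = (m : ℝ) • castVec x := by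
  ext; simp [castVec]

@[simp] lemma castVec_nsmul (m : ℕ) (x : Fin n → ℤ) : castVec (m • x) = (m : ℝ) • castVec x := by
  ext; simp [castVec]

@[simp] lemma castVec_zero : castVec (0 : Fin n → ℤ) = 0 := by
  ext; simp [castVec]

@[simp] lemma castVec_sum {ι : Type*} (s : Finset ι) (g : ι → Fin n → ℤ) :
    castVec (∑ i ∈ s, g i) = ∑ i ∈ s, castVec (g i) := by
  ext; simp [castVec, Finset.sum_apply]

lemma norm_castVec (x : Fin n → ℤ) : ‖castVec x‖ = ‖x‖ :=
  rfl

lemma finite_setOf_norm_castVec_le (r : ℝ) : {x : Fin n → ℤ | ‖castVec x‖ ≤ r}.Finite := by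
  simp only [norm_castVec, ← mem_closedBall_zero_iff, Set.ofPred_mem_eq]
  exact (isCompact_closedBall 0 r).finite_of_discrete

lemma PV_eq_closure (A : Finset (Fin n → ℤ)) :
    PV A = AddSubmonoid.closure (A : Set (Fin n → ℤ)) := by
  ext x
  constructor
  · rintro ⟨c, rfl⟩
    refine AddSubmonoid.sum_mem _ fun a ha => ?_
    rw [natCast_zsmul]
    exact AddSubmonoid.nsmul_mem _ (AddSubmonoid.subset_closure ha) _
  · intro hx
    obtain ⟨c, -, rfl⟩ := AddSubmonoid.mem_closure_finset.1 hx
    exact ⟨c, by simp only [natCast_zsmul]⟩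

lemma PV_insert_zero (T : Finset (Fin n → ℤ)) : PV (insert 0 T) = PV T := by
  rw [PV_eq_closure, PV_eq_closure, Finset.coe_insert, AddSubmonoid.closure_insert_zero]

lemma sum_smul_castVec_mem_coneV {A B : Finset (Fin n → ℤ)} (hBA : B ⊆ A)
    {t : (Fin n → ℤ) → ℝ} (ht : ∀ b ∈ B, 0 ≤ t b) : ∑ b ∈ B, t b • castVec b ∈ coneV A := by
  classical
  refine ⟨fun a => if a ∈ B then t a else 0, fun a _ => ?_, ?_⟩
  · dsimp only
    split_ifs with ha
    exacts [ht a ha, le_rfl]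
  · rw [← Finset.sum_subset hBA fun a _ ha => by simp [ha]]
    exact Finset.sum_congr rfl fun a ha => by simp [ha]

lemma castVec_mem_coneV_of_mem_PV {A : Finset (Fin n → ℤ)} {x : Fin n → ℤ} (hx : x ∈ PV A) :
    castVec x ∈ coneV A := by
  obtain ⟨c, rfl⟩ := hx
  simp only [castVec_sum, castVec_zsmul, Int.cast_natCast]
  exact sum_smul_castVec_mem_coneV subset_rfl fun a _ => by positivity

lemma coneV_add {A : Finset (Fin n → ℤ)} {x y : Fin n → ℝ} (hx : x ∈ coneV A) (hy : y ∈ coneV A) :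
    x + y ∈ coneV A := by
  obtain ⟨c, hc, rfl⟩ := hx
  obtain ⟨d, hd, rfl⟩ := hy
  refine ⟨c + d, fun a ha => add_nonneg (hc a ha) (hd a ha), ?_⟩
  simp only [Pi.add_apply, add_smul, Finset.sum_add_distrib]

lemma linearIndepOn_int_of_castVec {s : Finset (Fin n → ℤ)}
    (hs : LinearIndepOn ℝ castVec (s : Set (Fin n → ℤ))) :
    LinearIndepOn ℤ id (s : Set (Fin n → ℤ)) := by
  rw [linearIndepOn_finset_iff] at hs ⊢
  intro c hc i hi
  have hc' : ∑ i ∈ s, (c i : ℝ) • castVec i = 0 := by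
    simpa only [castVec_sum, castVec_zsmul, castVec_zero, id] using congrArg castVec hc
  exact_mod_cast hs _ hc' i hi

lemma card_le_of_linearIndepOn_castVec {s : Finset (Fin n → ℤ)}
    (hs : LinearIndepOn ℝ castVec (s : Set (Fin n → ℤ))) : s.card ≤ n := by
  simpa using hs.fintype_card_le_finrank

lemma exists_eq_add_linearCombination_of_mem_coneV {A : Finset (Fin n → ℤ)} {x : Fin n → ℤ}
    (hx : castVec x ∈ coneV A) :
    ∃ B ⊆ A, LinearIndepOn ℝ castVec (B : Set (Fin n → ℤ)) ∧
      ∃ f : Fin n → ℤ, castVec f ∈ coneV A ∧ ‖castVec f‖ ≤ ∑ a ∈ A, ‖castVec a‖ ∧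
        ∃ c : B → ℕ, x = f + Fintype.linearCombination ℕ Subtype.val c := by
  obtain ⟨t, ht, hsum⟩ := hx
  obtain ⟨B, hBA, hB, s, hs, hsum'⟩ := exists_linearIndepOn_nonneg_sum_eq (v := castVec) A t ht
  set c : B → ℕ := fun b => ⌊s b⌋₊
  have hf : castVec (x - Fintype.linearCombination ℕ Subtype.val c) =
      ∑ b ∈ B, (s b - ⌊s b⌋₊) • castVec b := by
    simp only [Fintype.linearCombination_apply, castVec_sub, castVec_sum, castVec_nsmul, c,
      sub_smul, Finset.sum_sub_distrib, hsum', hsum]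
    rw [Finset.sum_coe_sort B fun b => (⌊s b⌋₊ : ℝ) • castVec b]
  have hfrac : ∀ b ∈ B, 0 ≤ s b - ⌊s b⌋₊ ∧ s b - ⌊s b⌋₊ ≤ 1 := fun b hb =>
    ⟨sub_nonneg.2 (Nat.floor_le (hs b hb)), by linarith [Nat.lt_floor_add_one (s b)]⟩
  refine ⟨B, hBA, hB, x - Fintype.linearCombination ℕ Subtype.val c, ?_, ?_, c,
    (sub_add_cancel _ _).symm⟩ <;> rw [hf]
  · exact sum_smul_castVec_mem_coneV hBA fun b hb => (hfrac b hb).1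
  calc ‖∑ b ∈ B, (s b - ⌊s b⌋₊) • castVec b‖ ≤ ∑ b ∈ B, ‖castVec b‖ := by
        refine (norm_sum_le _ _).trans (Finset.sum_le_sum fun b hb => ?_)
        rw [norm_smul, Real.norm_of_nonneg (hfrac b hb).1]
        exact mul_le_of_le_one_left (norm_nonneg _) (hfrac b hb).2
    _ ≤ ∑ a ∈ A, ‖castVec a‖ :=
        Finset.sum_le_sum_of_subset_of_nonneg hBA fun _ _ _ => norm_nonneg _

def IsExceptionalPiece (A : Finset (Fin n → ℤ)) (v : Fin n → ℤ) (T : Finset (Fin n → ℤ)) :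
    Prop :=
  T ⊆ A ∧ T.card ≤ n - 1 ∧ LinearIndepOn ℝ castVec (T : Set (Fin n → ℤ)) ∧
    (v + ·) '' PV T ⊆ EV A

lemma linearCombination_mem_PV {A B : Finset (Fin n → ℤ)} (hBA : B ⊆ A) (c : B → ℕ) :
    Fintype.linearCombination ℕ Subtype.val c ∈ PV A := by
  rw [PV_eq_closure, SetLike.mem_coe, Fintype.linearCombination_apply]
  exact AddSubmonoid.sum_mem _ fun b _ =>
    AddSubmonoid.nsmul_mem _ (AddSubmonoid.subset_closure (hBA b.2)) _

lemma isLowerSet_setOf_add_linearCombination_mem_EV {A B : Finset (Fin n → ℤ)} (hBA : B ⊆ A)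
    {f : Fin n → ℤ} (hf : castVec f ∈ coneV A) :
    IsLowerSet {c : B → ℕ | f + Fintype.linearCombination ℕ Subtype.val c ∈ EV A} := by
  intro c c' hle hc
  refine ⟨?_, fun hPV => hc.2 ?_⟩
  · rw [castVec_add]
    exact coneV_add hf (castVec_mem_coneV_of_mem_PV (linearCombination_mem_PV hBA c'))
  · rw [← add_tsub_cancel_of_le hle, map_add, ← add_assoc, PV_eq_closure]
    rw [PV_eq_closure] at hPV
    exact add_mem hPV (by simpa [PV_eq_closure] using linearCombination_mem_PV hBA (c - c'))

lemma exists_add_linearCombination_mem_PV {A B : Finset (Fin n → ℤ)}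
    (hspan : Submodule.span ℤ (A : Set (Fin n → ℤ)) = ⊤) (hBA : B ⊆ A)
    (hB : LinearIndepOn ℝ castVec (B : Set (Fin n → ℤ))) (hBn : B.card = n) (f : Fin n → ℤ) :
    ∃ c : B → ℕ, f + Fintype.linearCombination ℕ Subtype.val c ∈ PV A := by
  have : Finite ((Fin n → ℤ) ⧸ Submodule.span ℤ (B : Set (Fin n → ℤ))) :=
    Submodule.finiteQuotientOfFreeOfRankEq _ <| by
      rw [finrank_span_finset_eq_card (linearIndepOn_int_of_castVec hB), hBn]
      simp
  have hidx : (AddSubgroup.closure (B : Set (Fin n → ℤ))).index ≠ 0 := by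
    rw [← Submodule.span_int_eq_addSubgroupClosure]
    exact AddSubgroup.index_ne_zero_of_finite (hH := this)
  obtain ⟨p, hp, hfp⟩ := exists_add_mem_closure_of_index_ne_zero (Finset.coe_subset.2 hBA)
    (by rw [← Submodule.span_int_eq_addSubgroupClosure, hspan]; rfl) hidx f
  have hrange := image_linearCombination_support_subset (Subtype.val : B → Fin n → ℤ) Set.univ
  simp only [Set.subset_univ, Set.ofPred_true, Set.image_univ, Subtype.range_coe_subtype,
    Finset.setOfPred_mem] at hrange
  obtain ⟨c, rfl⟩ : p ∈ Set.range (Fintype.linearCombination ℕ Subtype.val) := by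
    rw [hrange]; exact hp
  exact ⟨c, by rwa [PV_eq_closure]⟩

lemma card_le_of_translate_subset {A B : Finset (Fin n → ℤ)}
    (hspan : Submodule.span ℤ (A : Set (Fin n → ℤ)) = ⊤) (hBA : B ⊆ A)
    (hB : LinearIndepOn ℝ castVec (B : Set (Fin n → ℤ))) {f : Fin n → ℤ}
    (hf : castVec f ∈ coneV A) {p : B → ℕ} {T : Finset B}
    (hT : ∀ d : B → ℕ, d.support ⊆ T → f + Fintype.linearCombination ℕ Subtype.val (p + d) ∈ EV A) :
    T.card ≤ n - 1 := by
  have hle : T.card ≤ B.card := by simpa using T.card_le_univ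
  rcases (card_le_of_linearIndepOn_castVec hB).lt_or_eq with hlt | hBn
  · omega
  -- some point of `f + P(B)` lies in `P(A)`, so `T` cannot be all of `B`
  obtain ⟨c, hc⟩ := exists_add_linearCombination_mem_PV hspan hBA hB hBn f
  have hne : T ≠ Finset.univ := by
    rintro rfl
    exact ((isLowerSet_setOf_add_linearCombination_mem_EV hBA hf) le_add_self
      (hT c (by simp))).2 hc
  have := (Finset.card_lt_iff_ne_univ _).2 hne
  simp only [Fintype.card_coe] at this
  omega

lemma exists_finite_pieces_of_translate {A B : Finset (Fin n → ℤ)}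
    (hspan : Submodule.span ℤ (A : Set (Fin n → ℤ)) = ⊤) (hBA : B ⊆ A)
    (hB : LinearIndepOn ℝ castVec (B : Set (Fin n → ℤ))) {f : Fin n → ℤ}
    (hf : castVec f ∈ coneV A) :
    ∃ S : Set ((Fin n → ℤ) × Finset (Fin n → ℤ)), S.Finite ∧
      (∀ p ∈ S, IsExceptionalPiece A p.1 p.2) ∧
      ∀ c : B → ℕ, f + Fintype.linearCombination ℕ Subtype.val c ∈ EV A →
        ∃ p ∈ S, f + Fintype.linearCombination ℕ Subtype.val c ∈ (p.1 + ·) '' PV p.2 := by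
  classical
  obtain ⟨S, hS, hDS⟩ :=
    (isLowerSet_setOf_add_linearCombination_mem_EV hBA hf).exists_finite_eq_biUnion
  have hmem (c : B → ℕ) : f + Fintype.linearCombination ℕ Subtype.val c ∈ EV A ↔
      ∃ q ∈ S, c ∈ (q.1 + ·) '' {c | c.support ⊆ q.2} :=
    (Set.ext_iff.1 hDS c).trans (by simp only [Set.mem_iUnion₂, exists_prop])
  let piece (q : (B → ℕ) × Finset B) : (Fin n → ℤ) × Finset (Fin n → ℤ) :=
    (f + Fintype.linearCombination ℕ Subtype.val q.1, q.2.map (Function.Embedding.subtype _))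
  have himage (q : (B → ℕ) × Finset B) :
      (f + Fintype.linearCombination ℕ Subtype.val ·) ''
          ((q.1 + ·) '' {c | c.support ⊆ (q.2 : Set B)}) =
        ((piece q).1 + ·) '' PV (piece q).2 := by
    rw [PV_eq_closure, Finset.coe_map, Function.Embedding.coe_subtype,
      ← image_linearCombination_support_subset, Set.image_image, Set.image_image]
    simp only [map_add, add_assoc, piece]
  refine ⟨piece '' S, hS.image _, ?_, fun c hc => ?_⟩
  · rintro _ ⟨q, hq, rfl⟩
    have hsub : (piece q).2 ⊆ B := fun a ha => by
      obtain ⟨b, -, rfl⟩ := Finset.mem_map.1 ha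
      exact b.2
    refine ⟨hsub.trans hBA, ?_, hB.mono (Finset.coe_subset.2 hsub), ?_⟩
    · simpa [piece] using card_le_of_translate_subset hspan hBA hB hf
        fun d hd => (hmem _).2 ⟨q, hq, d, hd, rfl⟩
    rw [← himage]
    rintro _ ⟨c, hc, rfl⟩
    exact (hmem c).2 ⟨q, hq, hc⟩
  obtain ⟨q, hq, hcq⟩ := (hmem c).1 hc
  exact ⟨_, ⟨q, hq, rfl⟩, himage q ▸ Set.mem_image_of_mem _ hcq⟩

theorem exists_finite_pieces {A : Finset (Fin n → ℤ)}
    (hspan : Submodule.span ℤ (A : Set (Fin n → ℤ)) = ⊤) :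
    ∃ S : Set ((Fin n → ℤ) × Finset (Fin n → ℤ)), S.Finite ∧
      (∀ p ∈ S, IsExceptionalPiece A p.1 p.2) ∧ EV A ⊆ ⋃ p ∈ S, (p.1 + ·) '' PV p.2 := by
  let pairs : Set (Finset (Fin n → ℤ) × (Fin n → ℤ)) := {Bf | Bf.1 ⊆ A ∧
    LinearIndepOn ℝ castVec (Bf.1 : Set (Fin n → ℤ)) ∧ castVec Bf.2 ∈ coneV A ∧
    ‖castVec Bf.2‖ ≤ ∑ a ∈ A, ‖castVec a‖}
  have hpairs : pairs.Finite :=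
    ((Finset.finite_toSet A.powerset).prod (finite_setOf_norm_castVec_le _)).subset
      fun Bf hBf => ⟨Finset.mem_powerset.2 hBf.1, hBf.2.2.2⟩
  choose! S hS hSpiece hScover using fun Bf (hBf : Bf ∈ pairs) =>
    exists_finite_pieces_of_translate hspan hBf.1 hBf.2.1 hBf.2.2.1
  refine ⟨⋃ Bf ∈ pairs, S Bf, hpairs.biUnion hS, fun p hp => ?_, fun x hx => ?_⟩
  · obtain ⟨Bf, hBf, hp⟩ := Set.mem_iUnion₂.1 hp
    exact hSpiece Bf hBf p hp
  obtain ⟨B, hBA, hB, f, hf, hfR, c, rfl⟩ := exists_eq_add_linearCombination_of_mem_coneV hx.1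
  have hBf : (B, f) ∈ pairs := ⟨hBA, hB, hf, hfR⟩
  obtain ⟨p, hp, hxp⟩ := hScover (B, f) hBf c hx
  exact Set.mem_biUnion (Set.mem_biUnion hBf hp) hxp

lemma exists_coeff_le_mul_norm {T : Finset (Fin n → ℤ)}
    (hT : LinearIndepOn ℝ castVec (T : Set (Fin n → ℤ))) :
    ∃ K : NNReal, ∀ c : (Fin n → ℤ) → ℕ, ∀ b ∈ T,
      (c b : ℝ) ≤ K * ‖castVec (∑ b ∈ T, (c b : ℤ) • b)‖ := by
  set g := Fintype.linearCombination ℝ fun b : T => castVec (b : Fin n → ℤ)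
  have hker : LinearMap.ker g = ⊥ := LinearMap.ker_eq_bot'.2 fun c hc =>
    funext (Fintype.linearIndependent_iff.1 hT c (by rwa [Fintype.linearCombination_apply] at hc))
  obtain ⟨K, -, hK⟩ := g.exists_antilipschitzWith hker
  refine ⟨K, fun c b hb => ?_⟩
  have hg : g (fun b => (c b : ℝ)) = castVec (∑ b ∈ T, (c b : ℤ) • b) := by
    simp only [g, Fintype.linearCombination_apply, castVec_sum, castVec_zsmul, Int.cast_natCast]
    exact Finset.sum_coe_sort T fun b => (c b : ℝ) • castVec b
  calc (c b : ℝ) ≤ ‖fun b : T => (c b : ℝ)‖ := by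
        simpa using norm_le_pi_norm (fun b : T => (c b : ℝ)) ⟨b, hb⟩
    _ ≤ K * ‖castVec (∑ b ∈ T, (c b : ℤ) • b)‖ := hg ▸ hK.le_mul_norm (map_zero g) _

lemma exists_card_translate_PV_inter_le {T : Finset (Fin n → ℤ)}
    (hT : LinearIndepOn ℝ castVec (T : Set (Fin n → ℤ))) (v : Fin n → ℤ) (R : ℝ) :
    ∃ C : ℕ, ∀ N : ℕ, 1 ≤ N →
      Nat.card ↥((v + ·) '' PV T ∩ {x | ‖castVec x‖ ≤ N * R}) ≤ C * N ^ T.card := by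
  classical
  obtain ⟨K, hK⟩ := exists_coeff_le_mul_norm hT
  set Q := ⌈K * (R + ‖castVec v‖)⌉₊
  refine ⟨(Q + 1) ^ T.card, fun N hN => ?_⟩
  set F := (Fintype.piFinset fun _ : T => Finset.range (Q * N + 1)).image
    fun c : T → ℕ => v + ∑ b : T, (c b : ℤ) • (b : Fin n → ℤ)
  have hsub : (v + ·) '' PV T ∩ {x | ‖castVec x‖ ≤ N * R} ⊆ F := by
    rintro _ ⟨⟨_, ⟨c, rfl⟩, rfl⟩, hx⟩
    have hcoef (b) (hb : b ∈ T) : c b ≤ Q * N := by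
      have hy : ‖castVec (∑ b ∈ T, (c b : ℤ) • b)‖ ≤ N * (R + ‖castVec v‖) := calc
        _ = ‖castVec (v + ∑ b ∈ T, (c b : ℤ) • b) - castVec v‖ := by simp
        _ ≤ N * R + N * ‖castVec v‖ := (norm_sub_le _ _).trans
          (add_le_add hx (le_mul_of_one_le_left (norm_nonneg _) (by exact_mod_cast hN)))
        _ = _ := by ring
      have : (c b : ℝ) ≤ Q * N := calc
        (c b : ℝ) ≤ K * (N * (R + ‖castVec v‖)) := (hK c b hb).trans (by gcongr)
        _ = K * (R + ‖castVec v‖) * N := by ring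
        _ ≤ Q * N := by gcongr; exact Nat.le_ceil _
      exact_mod_cast this
    refine Finset.mem_image.2 ⟨fun b => c b, Fintype.mem_piFinset.2 fun b =>
      Finset.mem_range.2 (Nat.lt_succ_of_le (hcoef b b.2)), ?_⟩
    rw [Finset.sum_coe_sort T fun b => (c b : ℤ) • b]
  calc Nat.card _ ≤ Nat.card (F : Set (Fin n → ℤ)) := Nat.card_mono F.finite_toSet hsub
    _ = F.card := by simp
    _ ≤ (Q * N + 1) ^ T.card := Finset.card_image_le.trans (by simp)
    _ ≤ ((Q + 1) * N) ^ T.card := by gcongr; nlinarith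
    _ = (Q + 1) ^ T.card * N ^ T.card := mul_pow _ _ _

lemma exists_card_iUnion_inter_le {k d : ℕ} (v : Fin k → Fin n → ℤ)
    (T : Fin k → Finset (Fin n → ℤ)) (hT : ∀ i, LinearIndepOn ℝ castVec (T i : Set (Fin n → ℤ)))
    (hd : ∀ i, (T i).card ≤ d) (R : ℝ) :
    ∃ C : ℕ, ∀ N : ℕ, 1 ≤ N →
      Nat.card ↥((⋃ i, (v i + ·) '' PV (T i)) ∩ {x | ‖castVec x‖ ≤ N * R}) ≤ C * N ^ d := by
  choose C hC using fun i => exists_card_translate_PV_inter_le (hT i) (v i) R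
  refine ⟨∑ i, C i, fun N hN => ?_⟩
  rw [Set.iUnion_inter, Nat.card_coe_set_eq]
  calc (⋃ i, _).ncard ≤ ∑ i, ((v i + ·) '' PV (T i) ∩ {x | ‖castVec x‖ ≤ N * R}).ncard :=
        Set.ncard_iUnion_le_of_fintype _
    _ ≤ ∑ i, C i * N ^ d := Finset.sum_le_sum fun i _ => by
        rw [← Nat.card_coe_set_eq]
        exact (hC i N hN).trans (by gcongr; exact hd i)
    _ = (∑ i, C i) * N ^ d := (Finset.sum_mul _ _ _).symm

lemma norm_castVec_le_of_mem_smul_convexHull {A : Finset (Fin n → ℤ)} {N : ℕ} {x : Fin n → ℤ}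
    (hx : castVec x ∈ (N : ℝ) • convexHull ℝ (castVec '' (A : Set (Fin n → ℤ)))) :
    ‖castVec x‖ ≤ N * ∑ a ∈ A, ‖castVec a‖ := by
  have hhull : convexHull ℝ (castVec '' (A : Set (Fin n → ℤ))) ⊆
      Metric.closedBall 0 (∑ a ∈ A, ‖castVec a‖) :=
    convexHull_min (Set.image_subset_iff.2 fun a ha => mem_closedBall_zero_iff.2
      (Finset.single_le_sum (fun a _ => norm_nonneg (castVec a)) ha)) (convex_closedBall _ _)
  obtain ⟨y, hy, hxy⟩ := Set.mem_smul_set.1 hx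
  rw [← hxy, norm_smul, Real.norm_natCast]
  exact mul_le_mul_of_nonneg_left (mem_closedBall_zero_iff.1 (hhull hy)) (Nat.cast_nonneg N)

end Lattice

theorem stmt19_general (n : ℕ) (A : Finset (Fin n → ℤ))
    (hspan : Submodule.span ℤ (A : Set (Fin n → ℤ)) = ⊤) :
    (∃ (k : ℕ) (v : Fin k → (Fin n → ℤ)) (B : Fin k → Finset (Fin n → ℤ)),
      (∀ i, castVec (v i) ∈ coneV A) ∧
      (∀ i, B i ⊆ A) ∧
      (∀ i, (B i).card ≤ n - 1) ∧
      (∀ i, ∀ c : (Fin n → ℤ) → ℤ,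
        ∑ w ∈ B i, c w • w = 0 → ∀ w ∈ B i, c w = 0) ∧
      EV A = ⋃ i, (fun y => v i + y) '' PV (insert 0 (B i))) ∧
    ∃ C : ℕ, ∀ N : ℕ, 1 ≤ N →
      Nat.card
        (EV A ∩
          {x : Fin n → ℤ |
            castVec x ∈ (N : ℝ) • convexHull ℝ (castVec '' (A : Set (Fin n → ℤ)))} :
          Set (Fin n → ℤ)) ≤ C * N ^ (n - 1) := by
  obtain ⟨S, hSfin, hS, hcover⟩ := exists_finite_pieces hspan
  obtain ⟨k, e, rfl⟩ := hSfin.fin_embedding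
  have hpiece (i : Fin k) : IsExceptionalPiece A (e i).1 (e i).2 := hS _ ⟨i, rfl⟩
  have hEV : EV A = ⋃ i, ((e i).1 + ·) '' PV (e i).2 :=
    subset_antisymm (by simpa only [Set.biUnion_range] using hcover)
      (Set.iUnion_subset fun i => (hpiece i).2.2.2)
  refine ⟨⟨k, fun i => (e i).1, fun i => (e i).2,
    fun i => ((hpiece i).2.2.2 ⟨0, ⟨0, by simp⟩, add_zero _⟩).1, fun i => (hpiece i).1,
    fun i => (hpiece i).2.1,
    fun i => linearIndepOn_finset_iff.1 (linearIndepOn_int_of_castVec (hpiece i).2.2.1),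
    by simpa only [PV_insert_zero] using hEV⟩, ?_⟩
  obtain ⟨C, hC⟩ := exists_card_iUnion_inter_le _ _ (fun i => (hpiece i).2.2.1)
    (fun i => (hpiece i).2.1) (∑ a ∈ A, ‖castVec a‖)
  refine ⟨C, fun N hN => (Nat.card_mono ((finite_setOf_norm_castVec_le _).subset
    Set.inter_subset_right) ?_).trans (hC N hN)⟩
  rw [hEV]
  exact Set.inter_subset_inter_right _ fun x hx => norm_castVec_le_of_mem_smul_convexHull hx

/-- Theorem 3 and its consequence: `E(A)` is a finite union of
sets `v + P(B ∪ {0})` with `v ∈ C_A ∩ ℤⁿ` and `B ⊆ A` linearly independent with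
at most `n-1` elements; consequently `#(E(A) ∩ N·H(A)) = O(N^{n-1})`. -/
theorem stmt19 (n : ℕ) (A : Finset (Fin n → ℤ)) (h0 : (0 : Fin n → ℤ) ∈ A)
    (hspan : Submodule.span ℤ (A : Set (Fin n → ℤ)) = ⊤) :
    (∃ (k : ℕ) (v : Fin k → (Fin n → ℤ)) (B : Fin k → Finset (Fin n → ℤ)),
      (∀ i, castVec (v i) ∈ coneV A) ∧
      (∀ i, B i ⊆ A) ∧
      (∀ i, (B i).card ≤ n - 1) ∧
      (∀ i, ∀ c : (Fin n → ℤ) → ℤ,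
        ∑ w ∈ B i, c w • w = 0 → ∀ w ∈ B i, c w = 0) ∧
      EV A = ⋃ i, (fun y => v i + y) '' PV (insert 0 (B i))) ∧
    ∃ C : ℕ, ∀ N : ℕ, 1 ≤ N →
      Nat.card
        (EV A ∩
          {x : Fin n → ℤ |
            castVec x ∈ (N : ℝ) • convexHull ℝ (castVec '' (A : Set (Fin n → ℤ)))} :
          Set (Fin n → ℤ)) ≤ C * N ^ (n - 1) :=
  stmt19_general n A hspan
end
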